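/- arXiv:1607.00927 — 5 statements merged into one kernel-verified Lean document; each statement's English description precedes it below -/
import Mathlib

section
/- Let G = (V,E) be a finite connected graph containing at least one odd cycle, and let c ≥ 2 be an integer. Then for every nonempty initial active set S₀ ⊆ V there exists a set T reachable from S₀ by finitely many feasible c-successor steps such that T contains two adjacent vertices (equivalently, with positive probability there is a time at which two neighboring vertices are simultaneously active). -/
/-- The neighborhood `N(S)` of a set of vertices: all vertices adjacent to at
least one vertex of `S`. -/
def nbhd {V : Type*} (G : SimpleGraph V) (S : Set V) : Set V :=
  {w | ∃ v ∈ S, G.Adj v w}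

/-- `T` is a feasible `c`-successor of the nonempty active set `S` in the simple
`c`-BRW: each active vertex `v ∈ S` chooses a nonempty set `F v` of at most `c`
of its neighbors, and `T` is the union of all chosen vertices. -/
def FeasibleSucc {V : Type*} (G : SimpleGraph V) (c : ℕ) (S T : Set V) : Prop :=
  S.Nonempty ∧ ∃ F : V → Set V,
    (∀ v ∈ S, (F v).Nonempty ∧ F v ⊆ nbhd G {v} ∧ (F v).ncard ≤ c) ∧
    T = ⋃ v ∈ S, F v

/-!
Fix an edge `ab`. Moving every token one step along a shortest path to `a`, and a token at `a`
to `b`, eventually confines the active set to `{a, b}`: either both ends of the edge are active,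
or the active set is a singleton `{v}`. From `{v}`, take an odd closed walk at `v` (through the
odd cycle) and let two tokens traverse it in opposite directions; after half its length they
occupy the two ends of its middle edge.
-/

open Relation SimpleGraph

namespace FeasibleSucc

variable {V : Type*} {G : SimpleGraph V} {c : ℕ}

theorem image (hc : 1 ≤ c) {f : V → V} (hf : ∀ u, G.Adj u (f u)) {S : Set V}
    (hS : S.Nonempty) : FeasibleSucc G c S (f '' S) := by
  refine ⟨hS, fun u => {f u}, fun v _ => ⟨Set.singleton_nonempty _, ?_, ?_⟩, ?_⟩
  · rintro _ rfl
    exact ⟨v, rfl, hf v⟩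
  · simpa using hc
  · ext x
    simp [eq_comm]

theorem pair (hc : 2 ≤ c) {p q p' q' : V} (hp : G.Adj p p') (hq : G.Adj q q') :
    FeasibleSucc G c {p, q} {p', q'} := by
  classical
  let F : V → Set V := fun u => {x | u = p ∧ x = p' ∨ u = q ∧ x = q'}
  have hF : ∀ v ∈ ({p, q} : Set V), F v ⊆ {p', q'} := by
    rintro v - x (⟨-, rfl⟩ | ⟨-, rfl⟩) <;> simp
  refine ⟨⟨p, Or.inl rfl⟩, F, fun v hv => ⟨?_, ?_, ?_⟩, ?_⟩
  · rcases hv with rfl | rfl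
    · exact ⟨p', Or.inl ⟨rfl, rfl⟩⟩
    · exact ⟨q', Or.inr ⟨rfl, rfl⟩⟩
  · rintro x (⟨rfl, rfl⟩ | ⟨rfl, rfl⟩)
    exacts [⟨_, rfl, hp⟩, ⟨_, rfl, hq⟩]
  · calc (F v).ncard ≤ ({p', q'} : Set V).ncard := Set.ncard_le_ncard (hF v hv)
      _ ≤ 2 := (Set.ncard_insert_le _ _).trans (by simp)
      _ ≤ c := hc
  · ext x
    simp only [Set.mem_iUnion, Set.mem_insert_iff, Set.mem_singleton_iff, F, Set.mem_ofPred_eq]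
    grind

end FeasibleSucc

section Reachability

variable {V : Type*} {G : SimpleGraph V} {c : ℕ}

theorem reflTransGen_feasibleSucc_image_iterate (hc : 1 ≤ c) {f : V → V}
    (hf : ∀ u, G.Adj u (f u)) {S : Set V} (hS : S.Nonempty) (n : ℕ) :
    ReflTransGen (FeasibleSucc G c) S (f^[n] '' S) := by
  induction n with
  | zero => simp [ReflTransGen.refl]
  | succ n ih =>
    rw [Function.iterate_succ', Set.image_comp]
    exact ih.tail (.image hc hf (hS.image _))

theorem reflTransGen_feasibleSucc_pair_getVert (hc : 2 ≤ c) {u u' v v' : V}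
    (p : G.Walk u u') (q : G.Walk v v') {j : ℕ} (hp : j ≤ p.length) (hq : j ≤ q.length) :
    ReflTransGen (FeasibleSucc G c) {u, v} {p.getVert j, q.getVert j} := by
  induction j with
  | zero => simp [ReflTransGen.refl]
  | succ j ih =>
    exact (ih (by omega) (by omega)).tail
      (.pair hc (p.adj_getVert_succ (by omega)) (q.adj_getVert_succ (by omega)))

theorem exists_reflTransGen_adj_of_odd_closed_walk (hc : 2 ≤ c) {v : V} (w : G.Walk v v)
    (hw : Odd w.length) :
    ∃ T, ReflTransGen (FeasibleSucc G c) {v} T ∧ ∃ x y, x ∈ T ∧ y ∈ T ∧ G.Adj x y := by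
  obtain ⟨k, hk⟩ := hw
  have hreach := reflTransGen_feasibleSucc_pair_getVert hc w w.reverse (j := k)
    (by omega) (by rw [Walk.length_reverse]; omega)
  rw [Set.pair_eq_singleton, w.getVert_reverse, show w.length - k = k + 1 by omega] at hreach
  exact ⟨_, hreach, _, _, Or.inl rfl, Or.inr rfl, w.adj_getVert_succ (by omega)⟩

end Reachability

namespace SimpleGraph.Connected

variable {V : Type*} {G : SimpleGraph V} {c : ℕ}

theorem exists_odd_closed_walk (hconn : G.Connected) {a : V} {w : G.Walk a a}
    (hw : Odd w.length) (v : V) : ∃ w' : G.Walk v v, Odd w'.length := by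
  obtain ⟨p⟩ := hconn v a
  refine ⟨p.append (w.append p.reverse), ?_⟩
  simp only [Walk.length_append, Walk.length_reverse]
  obtain ⟨k, hk⟩ := hw
  exact ⟨p.length + k, by omega⟩

theorem exists_adj_dist_lt (hconn : G.Connected) {u a : V} (hu : u ≠ a) :
    ∃ v, G.Adj u v ∧ G.dist v a < G.dist u a := by
  obtain ⟨p, hp⟩ := hconn.exists_walk_length_eq_dist u a
  have hnil : ¬ p.Nil := fun h => hu h.eq
  refine ⟨p.snd, p.adj_snd hnil, ?_⟩
  have := G.dist_le p.tail
  have := p.length_tail_add_one hnil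
  omega

theorem exists_reflTransGen_subset_pair (hconn : G.Connected) (hc : 1 ≤ c) {a b : V} (hab : G.Adj a b) {S : Set V}
    (hS : S.Nonempty) (hfin : S.Finite) :
    ∃ T, ReflTransGen (FeasibleSucc G c) S T ∧ T.Nonempty ∧ T ⊆ {a, b} := by
  have hstep : ∀ u, ∃ v, G.Adj u v ∧ (u = a → v = b) ∧ (u ≠ a → G.dist v a < G.dist u a) := by
    intro u
    by_cases hu : u = a
    · subst hu
      exact ⟨b, hab, fun _ => rfl, fun h => (h rfl).elim⟩
    · obtain ⟨v, huv, hv⟩ := hconn.exists_adj_dist_lt hu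
      exact ⟨v, huv, fun h => (hu h).elim, fun _ => hv⟩
  choose f hadj hfa hdist using hstep
  have hconfined : ∀ n u, G.dist u a ≤ n → f^[n] u ∈ ({a, b} : Set V) := by
    intro n
    induction n with
    | zero =>
      intro u hu
      simp [hconn.dist_eq_zero_iff.mp (Nat.le_zero.mp hu)]
    | succ n ih =>
      intro u hu
      rw [Function.iterate_succ_apply]
      by_cases h : u = a
      · subst h
        rw [hfa u rfl]
        rcases n with _ | n
        · simp
        · exact ih _ (by rw [dist_eq_one_iff_adj.mpr hab.symm]; omega)
      · exact ih _ (by have := hdist u h; omega)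
  obtain ⟨n, hn⟩ := (hfin.image (G.dist · a)).bddAbove
  refine ⟨_, reflTransGen_feasibleSucc_image_iterate hc hadj hS n, hS.image _, ?_⟩
  rintro _ ⟨u, hu, rfl⟩
  exact hconfined n u (hn ⟨u, hu, rfl⟩)

end SimpleGraph.Connected

/-- On a finite connected graph containing an odd cycle, for `c ≥ 2` and every
nonempty initial active set `S₀`, some set reachable from `S₀` by finitely many
feasible `c`-successor steps contains two adjacent vertices. -/
theorem stmt3 {V : Type*} [Fintype V] (G : SimpleGraph V) (hconn : G.Connected)
    (hodd : ∃ (v : V) (w : G.Walk v v), w.IsCycle ∧ Odd w.length)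
    (c : ℕ) (hc : 2 ≤ c) (S₀ : Set V) (hS₀ : S₀.Nonempty) :
    ∃ T : Set V, Relation.ReflTransGen (FeasibleSucc G c) S₀ T ∧
      ∃ x y, x ∈ T ∧ y ∈ T ∧ G.Adj x y := by
  obtain ⟨a, w, -, hw⟩ := hodd
  have hab : G.Adj a w.snd := w.adj_snd (Walk.not_nil_iff_lt_length.mpr hw.pos)
  have from_singleton : ∀ v, ReflTransGen (FeasibleSucc G c) S₀ {v} →
      ∃ T, ReflTransGen (FeasibleSucc G c) S₀ T ∧ ∃ x y, x ∈ T ∧ y ∈ T ∧ G.Adj x y := by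
    intro v hv
    obtain ⟨w', hw'⟩ := hconn.exists_odd_closed_walk hw v
    obtain ⟨T, hvT, hT⟩ := exists_reflTransGen_adj_of_odd_closed_walk hc w' hw'
    exact ⟨T, hv.trans hvT, hT⟩
  obtain ⟨T, hS₀T, hT, hTab⟩ :=
    hconn.exists_reflTransGen_subset_pair (one_le_two.trans hc) hab hS₀ S₀.toFinite
  rcases Set.subset_pair_iff_eq.mp hTab with rfl | rfl | rfl | rfl
  · exact absurd hT Set.not_nonempty_empty
  · exact from_singleton a hS₀T
  · exact from_singleton w.snd hS₀T
  · exact ⟨_, hS₀T, a, w.snd, Or.inl rfl, Or.inr rfl, hab⟩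
end

section
/- In the hypercube graph H_N, any two distinct vertices have at most two common neighbors; more generally, for every s with 2 ≤ s ≤ 2^N, any s distinct vertices of H_N have at most s common neighbors. -/
/-- The hypercube graph `H_N` on vertex set `{0,1}^N`: two binary strings are
adjacent iff their Hamming distance equals 1. -/
def hypercube (N : ℕ) : SimpleGraph (Fin N → Bool) where
  Adj x y := hammingDist x y = 1
  symm := by
    constructor
    intro x y h
    rwa [hammingDist_comm]
  loopless := by
    constructor
    intro x h
    simp [hammingDist_self] at h

/-!
Every neighbour of `x` is `x` with one coordinate `i` flipped, and such a vertex can also be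
adjacent to `y ≠ x` only if `x` and `y` differ at `i`. Hence `x` and `y` have at most
`hammingDist x y` common neighbours, and if they have one at all, the triangle inequality
gives `hammingDist x y ≤ 2`. A family of at least two vertices has no more common neighbours
than any two of its members.
-/

open Function

section HammingDist

variable {ι : Type*} [Fintype ι]

theorem hammingDist_eq_one_iff {β : ι → Type*} [∀ i, DecidableEq (β i)] {x y : ∀ i, β i} :
    hammingDist x y = 1 ↔ ∃ i, x i ≠ y i ∧ ∀ j, j ≠ i → x j = y j := by
  simp only [hammingDist, Finset.card_eq_one, Finset.eq_singleton_iff_unique_mem,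
    Finset.mem_filter, Finset.mem_univ, true_and]
  refine exists_congr fun i => and_congr_right fun _ => forall_congr' fun j => ?_
  tauto

theorem hammingDist_eq_one_iff_eq_update_not [DecidableEq ι] {x y : ι → Bool} :
    hammingDist x y = 1 ↔ ∃ i, y = update x i (!x i) := by
  rw [hammingDist_eq_one_iff]
  constructor
  · rintro ⟨i, hi, hoff⟩
    refine ⟨i, funext fun j => ?_⟩
    by_cases hj : j = i
    · subst hj
      simpa [eq_comm, Bool.eq_not_iff] using hi
    · rw [update_of_ne hj, hoff j hj]
  · rintro ⟨i, rfl⟩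
    exact ⟨i, by simp, fun j hj => (update_of_ne hj _ _).symm⟩

theorem ne_of_hammingDist_update_not_eq_one [DecidableEq ι] {x y : ι → Bool} (hxy : x ≠ y)
    {i : ι} (h : hammingDist y (update x i (!x i)) = 1) : x i ≠ y i := by
  intro hi
  obtain ⟨j, -, hoff⟩ := hammingDist_eq_one_iff.mp h
  -- the flipped vertex already differs from `y` at `i`, so `i` is the only place they differ
  have hji : j = i := by
    by_contra hji
    exact absurd (hoff i (Ne.symm hji)) (by simp [← hi])
  subst hji
  refine hxy (funext fun k => ?_)
  by_cases hk : k = j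
  · rw [hk, hi]
  · rw [hoff k hk, update_of_ne hk]

end HammingDist

namespace SimpleGraph

variable {V : Type*} (G : SimpleGraph V)

theorem ncard_setOf_forall_adj_le_ncard_commonNeighbors [Finite V] {T : Set V} {a b : V}
    (ha : a ∈ T) (hb : b ∈ T) :
    {v | ∀ x ∈ T, G.Adj x v}.ncard ≤ (G.commonNeighbors a b).ncard :=
  Set.ncard_le_ncard (fun _ hv => ⟨hv a ha, hv b hb⟩) (Set.toFinite _)

end SimpleGraph

namespace hypercube

variable {N : ℕ}

theorem commonNeighbors_subset_image {x y : Fin N → Bool} (hxy : x ≠ y) :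
    (hypercube N).commonNeighbors x y ⊆ (fun i => update x i (!x i)) '' {i | x i ≠ y i} := by
  rintro v ⟨hxv, hyv⟩
  obtain ⟨i, rfl⟩ := hammingDist_eq_one_iff_eq_update_not.mp hxv
  exact ⟨i, ne_of_hammingDist_update_not_eq_one hxy hyv, rfl⟩

theorem ncard_commonNeighbors_le_hammingDist {x y : Fin N → Bool} (hxy : x ≠ y) :
    ((hypercube N).commonNeighbors x y).ncard ≤ hammingDist x y :=
  calc ((hypercube N).commonNeighbors x y).ncard
      ≤ ((fun i => update x i (!x i)) '' {i | x i ≠ y i}).ncard :=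
        Set.ncard_le_ncard (commonNeighbors_subset_image hxy) (Set.toFinite _)
    _ ≤ {i | x i ≠ y i}.ncard := Set.ncard_image_le (Set.toFinite _)
    _ = hammingDist x y := by
        rw [hammingDist, ← Set.ncard_coe_finset]
        simp

theorem ncard_commonNeighbors_le_two {x y : Fin N → Bool} (hxy : x ≠ y) :
    ((hypercube N).commonNeighbors x y).ncard ≤ 2 := by
  rcases Set.eq_empty_or_nonempty ((hypercube N).commonNeighbors x y) with
    hempty | ⟨v, hxv, hyv⟩
  · simp [hempty]
  · calc ((hypercube N).commonNeighbors x y).ncard ≤ hammingDist x y :=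
          ncard_commonNeighbors_le_hammingDist hxy
      _ ≤ hammingDist x v + hammingDist v y := hammingDist_triangle x v y
      _ = 2 := by
          rw [show hammingDist x v = 1 from hxv, hammingDist_comm,
            show hammingDist y v = 1 from hyv]

end hypercube

/-- In the hypercube `H_N`, two distinct vertices have at most two common
neighbors; more generally, any `s` distinct vertices (`2 ≤ s ≤ 2^N`) have at
most `s` common neighbors. -/
theorem stmt6 (N : ℕ) :
    (∀ x y : Fin N → Bool, x ≠ y →
      {v | (hypercube N).Adj x v ∧ (hypercube N).Adj y v}.ncard ≤ 2) ∧
    (∀ T : Set (Fin N → Bool), 2 ≤ T.ncard → T.ncard ≤ 2 ^ N →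
      {v | ∀ x ∈ T, (hypercube N).Adj x v}.ncard ≤ T.ncard) := by
  refine ⟨fun x y hxy => hypercube.ncard_commonNeighbors_le_two hxy, fun T hT _ => ?_⟩
  obtain ⟨a, b, ha, hb, hab⟩ := (Set.one_lt_ncard_iff T.toFinite).mp hT
  calc {v | ∀ x ∈ T, (hypercube N).Adj x v}.ncard
      ≤ ((hypercube N).commonNeighbors a b).ncard :=
        (hypercube N).ncard_setOf_forall_adj_le_ncard_commonNeighbors ha hb
    _ ≤ 2 := hypercube.ncard_commonNeighbors_le_two hab
    _ ≤ T.ncard := hT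
end

section
/- Let G be a finite connected d-regular graph on n vertices with adjacency matrix A, and let λ < d be such that every eigenvalue of A other than the largest one d satisfies |λ_i| ≤ λ (i.e. G is a λ absolute eigenvalue expander). Then for every set S of vertices with |S| ≤ n/2, the neighborhood satisfies |N(S)| ≥ |S| / ( λ²/d² + (1 − λ²/d²)·|S|/n ). -/
open Matrix Finset

theorem OrthonormalBasis.dotProduct_self_eq_sum_sq {ι : Type*} [Fintype ι]
    (b : OrthonormalBasis ι ℝ (EuclideanSpace ℝ ι)) (x : ι → ℝ) :
    x ⬝ᵥ x = ∑ j, (⇑(b j) ⬝ᵥ x) ^ 2 := by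
  have h := b.sum_sq_inner_right (WithLp.toLp 2 x)
  rw [← real_inner_self_eq_norm_sq, EuclideanSpace.inner_toLp_toLp, star_trivial] at h
  simpa only [EuclideanSpace.inner_eq_star_dotProduct, star_trivial, dotProduct_comm x]
    using h.symm

theorem Matrix.IsHermitian.mulVec_dotProduct_mulVec_le {ι : Type*} [Fintype ι] [DecidableEq ι]
    {A : Matrix ι ι ℝ} (hA : A.IsHermitian) {c r : ℝ}
    (hr : ∀ μ ∈ spectrum ℝ A, μ ≠ c → |μ| ≤ r) {y : ι → ℝ}
    (hy : ∀ u, A *ᵥ u = c • u → u ⬝ᵥ y = 0) :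
    A *ᵥ y ⬝ᵥ A *ᵥ y ≤ r ^ 2 * (y ⬝ᵥ y) := by
  set b := hA.eigenvectorBasis
  have hcoeff (j : ι) : ⇑(b j) ⬝ᵥ A *ᵥ y = hA.eigenvalues j * (⇑(b j) ⬝ᵥ y) := by
    rw [dotProduct_mulVec, ← mulVec_transpose, (isHermitian_iff_isSymm.mp hA).eq,
      hA.mulVec_eigenvectorBasis, smul_dotProduct, smul_eq_mul]
  rw [b.dotProduct_self_eq_sum_sq, b.dotProduct_self_eq_sum_sq, mul_sum]
  refine sum_le_sum fun j _ => ?_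
  rw [hcoeff, mul_pow]
  by_cases hj : hA.eigenvalues j = c
  · rw [hy _ (hj ▸ hA.mulVec_eigenvectorBasis j)]
    simp
  · have hμ := hr _ (hA.eigenvalues_mem_spectrum_real j) hj
    exact mul_le_mul_of_nonneg_right (sq_le_sq.mpr (hμ.trans (le_abs_self r))) (sq_nonneg _)

theorem sq_dotProduct_one_le_ncard_mul {ι : Type*} [Fintype ι] {x : ι → ℝ} {T : Set ι}
    (hx : ∀ i ∉ T, x i = 0) : (x ⬝ᵥ 1) ^ 2 ≤ T.ncard * (x ⬝ᵥ x) := by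
  classical
  have hsub (f : ι → ℝ) (hf : ∀ i ∉ T, f i = 0) : ∑ i ∈ T.toFinset, f i = ∑ i, f i :=
    sum_subset (subset_univ _) fun i _ hi => hf i (by simpa using hi)
  rw [dotProduct_one, dotProduct, Set.ncard_eq_toFinset_card', ← hsub x hx,
    ← hsub (fun i => x i * x i) fun i hi => by simp [hx i hi]]
  simpa only [← sq] using sq_sum_le_card_mul_sum_sq

namespace SimpleGraph

variable {V : Type*} [Fintype V] {G : SimpleGraph V} [DecidableRel G.Adj] {d : ℕ}

theorem IsRegularOfDegree.adjMatrix_mulVec_one {α : Type*} [NonAssocSemiring α]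
    (hreg : G.IsRegularOfDegree d) : G.adjMatrix α *ᵥ 1 = (d : α) • 1 := by
  ext v
  simpa using adjMatrix_mulVec_const_apply_of_regular hreg (a := (1 : α)) (v := v)

theorem IsRegularOfDegree.adjMatrix_mulVec_dotProduct_one {α : Type*} [CommSemiring α]
    (hreg : G.IsRegularOfDegree d) (x : V → α) :
    G.adjMatrix α *ᵥ x ⬝ᵥ 1 = d * (x ⬝ᵥ 1) := by
  rw [dotProduct_comm, dotProduct_mulVec, ← mulVec_transpose, transpose_adjMatrix,
    hreg.adjMatrix_mulVec_one, smul_dotProduct, smul_eq_mul, dotProduct_comm]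

theorem IsRegularOfDegree.apply_eq_of_adjMatrix_mulVec_eq [DecidableEq V]
    (hreg : G.IsRegularOfDegree d) (hconn : G.Connected) {u : V → ℝ}
    (hu : G.adjMatrix ℝ *ᵥ u = (d : ℝ) • u) (v w : V) : u v = u w := by
  have hlap : G.lapMatrix ℝ *ᵥ u = 0 := by
    ext a
    have := congrFun hu a
    simp only [Pi.smul_apply, smul_eq_mul] at this
    simp [lapMatrix, sub_mulVec, degMatrix_mulVec_apply, hreg a, this]
  exact (lapMatrix_mulVec_eq_zero_iff_forall_reachable G).mp hlap v w (hconn v w)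

theorem IsRegularOfDegree.dotProduct_eq_zero_of_adjMatrix_mulVec_eq [DecidableEq V]
    (hreg : G.IsRegularOfDegree d) (hconn : G.Connected) {u y : V → ℝ}
    (hu : G.adjMatrix ℝ *ᵥ u = (d : ℝ) • u) (hy : y ⬝ᵥ 1 = 0) : u ⬝ᵥ y = 0 := by
  obtain ⟨v⟩ := hconn.nonempty
  have hu_const : u = u v • 1 := funext fun w => by
    simp [hreg.apply_eq_of_adjMatrix_mulVec_eq hconn hu w v]
  rw [hu_const, smul_dotProduct, one_dotProduct, ← dotProduct_one, hy, smul_zero]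

theorem adjMatrix_mulVec_dotProduct_self_le [DecidableEq V] (hconn : G.Connected)
    (hreg : G.IsRegularOfDegree d) {lam : ℝ}
    (hspec : ∀ μ ∈ spectrum ℝ (G.adjMatrix ℝ), μ ≠ d → |μ| ≤ lam) (x : V → ℝ) :
    G.adjMatrix ℝ *ᵥ x ⬝ᵥ G.adjMatrix ℝ *ᵥ x ≤
      lam ^ 2 * (x ⬝ᵥ x - (x ⬝ᵥ 1) ^ 2 / Fintype.card V) +
        d ^ 2 * (x ⬝ᵥ 1) ^ 2 / Fintype.card V := by
  have : Nonempty V := hconn.nonempty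
  have hn : (Fintype.card V : ℝ) ≠ 0 := by positivity
  set a := (x ⬝ᵥ 1) / Fintype.card V
  set y := x - a • 1
  have hy : y ⬝ᵥ 1 = 0 := by
    simp only [y, a, sub_dotProduct, smul_dotProduct, one_dotProduct_one, smul_eq_mul]
    field_simp
    ring
  have hAy : G.adjMatrix ℝ *ᵥ y ⬝ᵥ 1 = 0 := by
    rw [hreg.adjMatrix_mulVec_dotProduct_one, hy, mul_zero]
  have hAy_sq := (G.isHermitian_adjMatrix ℝ).mulVec_dotProduct_mulVec_le hspec
    fun u hu => hreg.dotProduct_eq_zero_of_adjMatrix_mulVec_eq hconn hu hy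
  have hAx : G.adjMatrix ℝ *ᵥ x = G.adjMatrix ℝ *ᵥ y + ((d : ℝ) * a) • 1 := by
    rw [show x = y + a • 1 by simp [y], mulVec_add, mulVec_smul, hreg.adjMatrix_mulVec_one,
      smul_smul, mul_comm]
  have hAx_sq : G.adjMatrix ℝ *ᵥ x ⬝ᵥ G.adjMatrix ℝ *ᵥ x =
      G.adjMatrix ℝ *ᵥ y ⬝ᵥ G.adjMatrix ℝ *ᵥ y + d ^ 2 * (x ⬝ᵥ 1) ^ 2 / Fintype.card V := by
    rw [hAx]
    simp only [add_dotProduct, dotProduct_add, smul_dotProduct, dotProduct_smul,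
      one_dotProduct_one, dotProduct_comm 1, hAy, smul_eq_mul, a]
    field_simp
    ring
  have hy_sq : y ⬝ᵥ y = x ⬝ᵥ x - (x ⬝ᵥ 1) ^ 2 / Fintype.card V := by
    simp only [y, sub_dotProduct, dotProduct_sub, smul_dotProduct, dotProduct_smul,
      one_dotProduct_one, dotProduct_comm 1, smul_eq_mul, a]
    field_simp
    ring
  rw [hAx_sq, ← hy_sq]
  linarith

theorem adjMatrix_mulVec_apply_eq_zero_of_notMem_nbhd {α : Type*} [NonAssocSemiring α]
    {S : Set V} {x : V → α} (hx : ∀ v ∉ S, x v = 0) {w : V} (hw : w ∉ nbhd G S) :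
    (G.adjMatrix α *ᵥ x) w = 0 := by
  rw [adjMatrix_mulVec_apply]
  exact sum_eq_zero fun u hu =>
    hx u fun huS => hw ⟨u, huS, G.adj_symm ((G.mem_neighborFinset w u).mp hu)⟩

theorem sq_degree_mul_ncard_le_ncard_nbhd_mul [DecidableEq V] (hconn : G.Connected)
    (hreg : G.IsRegularOfDegree d) {lam : ℝ}
    (hspec : ∀ μ ∈ spectrum ℝ (G.adjMatrix ℝ), μ ≠ d → |μ| ≤ lam) (S : Set V) :
    ((d : ℝ) * S.ncard) ^ 2 ≤ (nbhd G S).ncard *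
      (lam ^ 2 * (S.ncard - S.ncard ^ 2 / Fintype.card V) +
        d ^ 2 * S.ncard ^ 2 / Fintype.card V) := by
  classical
  set χ : V → ℝ := S.indicator 1
  have hχ_one : χ ⬝ᵥ 1 = S.ncard := by
    simp [χ, dotProduct_one, Set.indicator_apply, Set.ncard_eq_toFinset_card']
  have hχ_self : χ ⬝ᵥ χ = S.ncard := by
    rw [← hχ_one]
    refine sum_congr rfl fun v _ => ?_
    by_cases hv : v ∈ S <;> simp [χ, hv]
  calc ((d : ℝ) * S.ncard) ^ 2 = (G.adjMatrix ℝ *ᵥ χ ⬝ᵥ 1) ^ 2 := by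
        rw [hreg.adjMatrix_mulVec_dotProduct_one, hχ_one]
    _ ≤ (nbhd G S).ncard * (G.adjMatrix ℝ *ᵥ χ ⬝ᵥ G.adjMatrix ℝ *ᵥ χ) :=
        sq_dotProduct_one_le_ncard_mul fun w hw =>
          adjMatrix_mulVec_apply_eq_zero_of_notMem_nbhd
            (fun v hv => Set.indicator_of_notMem hv _) hw
    _ ≤ _ := by
        gcongr
        simpa only [hχ_one, hχ_self] using adjMatrix_mulVec_dotProduct_self_le hconn hreg hspec χ

end SimpleGraph

theorem div_le_of_sq_mul_le {d s t n lam : ℝ} (hd : 0 < d) (hs : 0 < s) (hsn : s ≤ n)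
    (h : (d * s) ^ 2 ≤ t * (lam ^ 2 * (s - s ^ 2 / n) + d ^ 2 * s ^ 2 / n)) :
    s / (lam ^ 2 / d ^ 2 + (1 - lam ^ 2 / d ^ 2) * (s / n)) ≤ t := by
  have hn : 0 < n := hs.trans_le hsn
  have hD : 0 < lam ^ 2 * (s - s ^ 2 / n) + d ^ 2 * s ^ 2 / n := by
    have : 0 ≤ s - s ^ 2 / n := by
      rw [sub_nonneg, div_le_iff₀ hn, sq]
      exact mul_le_mul_of_nonneg_left hsn hs.le
    positivity
  have hE : lam ^ 2 / d ^ 2 + (1 - lam ^ 2 / d ^ 2) * (s / n) =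
      (lam ^ 2 * (s - s ^ 2 / n) + d ^ 2 * s ^ 2 / n) / (d ^ 2 * s) := by
    field_simp
    ring
  rw [hE, div_div_eq_mul_div, div_le_iff₀ hD]
  linarith

theorem stmt7_general {V : Type*} [Fintype V] [DecidableEq V] (G : SimpleGraph V)
    [DecidableRel G.Adj] (hconn : G.Connected)
    (d : ℕ) (hreg : G.IsRegularOfDegree d)
    (n : ℕ) (hn : Fintype.card V = n)
    (lam : ℝ)
    (hspec : ∀ μ ∈ spectrum ℝ (SimpleGraph.adjMatrix ℝ G), μ ≠ (d : ℝ) → |μ| ≤ lam)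
    (S : Set V) (hS : (S.ncard : ℝ) ≤ n / 2) :
    (S.ncard : ℝ) / (lam ^ 2 / d ^ 2 + (1 - lam ^ 2 / d ^ 2) * (S.ncard / n)) ≤
      (nbhd G S).ncard := by
  subst hn
  rcases Nat.eq_zero_or_pos S.ncard with hS_empty | hS_pos
  · simp [hS_empty]
  have hs : (1 : ℝ) ≤ S.ncard := by exact_mod_cast hS_pos
  have : Nontrivial V := by
    rw [← Fintype.one_lt_card_iff_nontrivial, ← Nat.cast_lt (α := ℝ), Nat.cast_one]
    linarith
  have hd : (0 : ℝ) < d := by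
    have := hconn.preconnected.degree_pos_of_nontrivial (Classical.arbitrary V)
    rw [hreg] at this
    exact_mod_cast this
  exact div_le_of_sq_mul_le hd (by linarith) (by linarith)
    (SimpleGraph.sq_degree_mul_ncard_le_ncard_nbhd_mul hconn hreg hspec S)

/-- Tanner's vertex-expansion theorem: if `G` is a finite connected `d`-regular
graph on `n` vertices whose adjacency-matrix eigenvalues other than the largest
one `d` all have absolute value at most `lam < d`, then every vertex set `S`
with `|S| ≤ n/2` satisfies
`|N(S)| ≥ |S| / ( lam²/d² + (1 − lam²/d²)·|S|/n )`. -/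
theorem stmt7 {V : Type*} [Fintype V] [DecidableEq V] (G : SimpleGraph V)
    [DecidableRel G.Adj] (hconn : G.Connected)
    (d : ℕ) (hreg : G.IsRegularOfDegree d)
    (n : ℕ) (hn : Fintype.card V = n)
    (lam : ℝ) (hlam : lam < d)
    (hspec : ∀ μ ∈ spectrum ℝ (SimpleGraph.adjMatrix ℝ G), μ ≠ (d : ℝ) → |μ| ≤ lam)
    (S : Set V) (hS : (S.ncard : ℝ) ≤ n / 2) :
    (S.ncard : ℝ) / (lam ^ 2 / d ^ 2 + (1 - lam ^ 2 / d ^ 2) * (S.ncard / n)) ≤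
      (nbhd G S).ncard :=
  stmt7_general G hconn d hreg n hn lam hspec S hS
end

section
/- Let G be a finite connected d-regular graph on n vertices whose adjacency matrix A satisfies |λ_i| ≤ ε·d for every eigenvalue λ_i of A other than the largest one d, where ε < 1 (i.e. G is an ε-expander graph). Then for every δ ≤ 1/2 and every set S of vertices with |S| ≤ δ·n, the neighborhood satisfies |N(S)| ≥ |S| / ( ε²(1−δ) + δ ). -/
/-!
Let `f` be the indicator vector of `S` and `g = A f`. Since `g` is supported on `N(S)` and sums to
`d |S|`, Cauchy–Schwarz gives `(d |S|)² ≤ |N(S)| ‖g‖²`. On the other hand, the all-ones vector is an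
eigenvector for `d`, and by connectivity the `d`-eigenspace consists of the constants, so `A`
contracts the orthogonal complement of the constants by the factor `ε d`. Splitting `f` along the
constants therefore gives `‖g‖² ≤ d² |S|²/n + ε² d² (|S| - |S|²/n)`. Comparing the two bounds and
using `|S|/n ≤ δ` and `ε² ≤ 1` yields the claim.
-/

open scoped RealInnerProductSpace
open Module.End Matrix

namespace LinearMap.IsSymmetric

variable {E : Type*} [NormedAddCommGroup E] [InnerProductSpace ℝ E] {T : E →ₗ[ℝ] E}

theorem norm_apply_sq_le_of_forall_inner_eigenspace_eq_zero [FiniteDimensional ℝ E]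
    (hT : T.IsSymmetric) {μ r : ℝ} (hr : ∀ ν ∈ spectrum ℝ T, ν ≠ μ → |ν| ≤ r) {x : E}
    (hx : ∀ y ∈ eigenspace T μ, ⟪y, x⟫ = 0) : ‖T x‖ ^ 2 ≤ r ^ 2 * ‖x‖ ^ 2 := by
  set b := hT.eigenvectorBasis rfl
  set ev := hT.eigenvalues rfl
  have inner_apply (i) : ⟪b i, T x⟫ = ev i * ⟪b i, x⟫ := by
    rw [← hT, hT.apply_eigenvectorBasis, RCLike.ofReal_real_eq_id, id_eq, real_inner_smul_left]
  rw [← b.sum_sq_inner_right, ← b.sum_sq_inner_right, Finset.mul_sum]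
  refine Finset.sum_le_sum fun i _ => ?_
  rw [inner_apply, mul_pow]
  by_cases hi : ev i = μ
  · have hb : b i ∈ eigenspace T μ := hi ▸ (hT.hasEigenvector_eigenvectorBasis rfl i).1
    simp [hx _ hb]
  · have hle := hr _ (hT.hasEigenvalue_eigenvalues rfl i).mem_spectrum hi
    exact mul_le_mul_of_nonneg_right (sq_le_sq' (abs_le.mp hle).1 (abs_le.mp hle).2) (sq_nonneg _)

theorem norm_apply_sq_le_of_apply_eq_smul (hT : T.IsSymmetric) {u : E} {μ r : ℝ}
    (hu : T u = μ • u) (hr : ∀ y, ⟪u, y⟫ = 0 → ‖T y‖ ^ 2 ≤ r ^ 2 * ‖y‖ ^ 2) (x : E) :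
    ‖T x‖ ^ 2 ≤ μ ^ 2 * (⟪u, x⟫ ^ 2 / ‖u‖ ^ 2) + r ^ 2 * (‖x‖ ^ 2 - ⟪u, x⟫ ^ 2 / ‖u‖ ^ 2) := by
  set c := ⟪u, x⟫ / ‖u‖ ^ 2
  set y := x - c • u
  have hcu : ‖c • u‖ ^ 2 = ⟪u, x⟫ ^ 2 / ‖u‖ ^ 2 := by
    rcases eq_or_ne u 0 with rfl | hu0
    · simp
    rw [norm_smul, mul_pow, Real.norm_eq_abs, sq_abs, div_pow]
    field_simp
  have huy : ⟪u, y⟫ = 0 := by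
    rcases eq_or_ne u 0 with rfl | hu0
    · simp
    simp only [y, c, inner_sub_right, real_inner_smul_right, real_inner_self_eq_norm_sq]
    field_simp
    ring
  have huTy : ⟪u, T y⟫ = 0 := by rw [← hT, hu, real_inner_smul_left, huy, mul_zero]
  have hxy : x = y + c • u := (sub_add_cancel x _).symm
  have hx : ‖x‖ ^ 2 = ‖c • u‖ ^ 2 + ‖y‖ ^ 2 := by
    rw [hxy, norm_add_sq_real, real_inner_smul_right, real_inner_comm, huy]
    ring
  have hTx : ‖T x‖ ^ 2 = μ ^ 2 * ‖c • u‖ ^ 2 + ‖T y‖ ^ 2 := by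
    rw [hxy, map_add, map_smul, hu, smul_smul, norm_add_sq_real, real_inner_smul_right,
      real_inner_comm, huTy]
    simp only [norm_smul, Real.norm_eq_abs, abs_mul, mul_pow, sq_abs]
    ring
  rw [hTx, ← hcu]
  nlinarith [hr y huy]

end LinearMap.IsSymmetric

namespace EuclideanSpace

variable {ι : Type*} [Fintype ι]

theorem sq_sum_le_card_mul_norm_sq {x : EuclideanSpace ℝ ι} {s : Finset ι}
    (hx : ∀ i ∉ s, x i = 0) : (∑ i, x i) ^ 2 ≤ s.card * ‖x‖ ^ 2 := by
  rw [← Finset.sum_subset (Finset.subset_univ s) fun i _ hi => hx i hi, EuclideanSpace.norm_sq_eq]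
  refine sq_sum_le_card_mul_sum_sq.trans (mul_le_mul_of_nonneg_left ?_ (Nat.cast_nonneg _))
  simp only [Real.norm_eq_abs, sq_abs]
  exact Finset.sum_le_sum_of_subset_of_nonneg (Finset.subset_univ s) fun i _ _ => sq_nonneg _

theorem norm_toLp_one_sq : ‖(WithLp.toLp 2 (1 : ι → ℝ))‖ ^ 2 = Fintype.card ι := by
  simp [EuclideanSpace.norm_eq]

theorem inner_toLp_one_toLp_indicator_one (S : Set ι) :
    ⟪(WithLp.toLp 2 1 : EuclideanSpace ℝ ι), WithLp.toLp 2 (S.indicator 1)⟫ = S.ncard := by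
  classical
  simp [PiLp.inner_apply, Set.indicator_apply, Set.ncard_eq_toFinset_card']

theorem norm_toLp_indicator_one_sq (S : Set ι) :
    ‖(WithLp.toLp 2 (S.indicator (1 : ι → ℝ)))‖ ^ 2 = S.ncard := by
  classical
  simp [EuclideanSpace.norm_sq_eq, Set.indicator_apply, apply_ite, Set.ncard_eq_toFinset_card']

end EuclideanSpace

namespace SimpleGraph

variable {V : Type*} [Fintype V] [DecidableEq V] {G : SimpleGraph V} [DecidableRel G.Adj] {d : ℕ}

theorem isSymmetric_toEuclideanLin_adjMatrix : (toEuclideanLin (G.adjMatrix ℝ)).IsSymmetric :=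
  isSymmetric_toEuclideanLin_iff.mpr (G.isHermitian_adjMatrix ℝ)

theorem IsRegularOfDegree.toEuclideanLin_adjMatrix_one (hreg : G.IsRegularOfDegree d) :
    toEuclideanLin (G.adjMatrix ℝ) (WithLp.toLp 2 1) = (d : ℝ) • WithLp.toLp 2 (1 : V → ℝ) := by
  ext v
  simpa using adjMatrix_mulVec_const_apply_of_regular hreg (a := (1 : ℝ)) (v := v)

theorem Connected.eq_of_adjMatrix_mulVec_eq_smul (hconn : G.Connected)
    (hreg : G.IsRegularOfDegree d) {x : V → ℝ} (hx : G.adjMatrix ℝ *ᵥ x = (d : ℝ) • x) (v w : V) :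
    x v = x w := by
  have hlap : G.lapMatrix ℝ *ᵥ x = 0 := by
    rw [lapMatrix, sub_mulVec, hx]
    ext u
    simp [degMatrix_mulVec_apply, hreg.degree_eq]
  exact (G.lapMatrix_mulVec_eq_zero_iff_forall_reachable).mp hlap v w (hconn v w)

theorem Connected.inner_eq_zero_of_mem_eigenspace (hconn : G.Connected)
    (hreg : G.IsRegularOfDegree d) {x y : EuclideanSpace ℝ V}
    (hy : y ∈ eigenspace (toEuclideanLin (G.adjMatrix ℝ)) d) (hx : ⟪WithLp.toLp 2 1, x⟫ = 0) :
    ⟪y, x⟫ = 0 := by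
  obtain ⟨v₀⟩ := hconn.nonempty
  have hy' : G.adjMatrix ℝ *ᵥ y = (d : ℝ) • y := congrArg WithLp.ofLp (mem_eigenspace_iff.mp hy)
  have hconst (v : V) : y v = y v₀ := hconn.eq_of_adjMatrix_mulVec_eq_smul hreg hy' v v₀
  simp only [PiLp.inner_apply, RCLike.inner_apply, conj_trivial, Pi.one_apply, mul_one] at hx ⊢
  simp only [hconst, ← Finset.sum_mul, hx, zero_mul]

theorem exists_mem_spectrum_adjMatrix_ne [Nonempty V] {c : ℝ} (hc : c ≠ 0) :
    ∃ μ ∈ spectrum ℝ (G.adjMatrix ℝ), μ ≠ c := by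
  have hA := G.isHermitian_adjMatrix ℝ
  by_contra! h
  have htrace := hA.trace_eq_sum_eigenvalues
  simp only [trace_adjMatrix, h _ (hA.eigenvalues_mem_spectrum_real _), RCLike.ofReal_real_eq_id,
    id_eq, Finset.sum_const, Finset.card_univ, nsmul_eq_mul] at htrace
  exact hc (by simpa using htrace.symm)

theorem Connected.norm_toEuclideanLin_adjMatrix_sq_le (hconn : G.Connected)
    (hreg : G.IsRegularOfDegree d) {ε : ℝ}
    (hspec : ∀ μ ∈ spectrum ℝ (G.adjMatrix ℝ), μ ≠ d → |μ| ≤ ε * d) (x : EuclideanSpace ℝ V) :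
    ‖toEuclideanLin (G.adjMatrix ℝ) x‖ ^ 2 ≤
      d ^ 2 * (⟪WithLp.toLp 2 1, x⟫ ^ 2 / ‖(WithLp.toLp 2 1 : EuclideanSpace ℝ V)‖ ^ 2) +
      (ε * d) ^ 2 *
        (‖x‖ ^ 2 - ⟪WithLp.toLp 2 1, x⟫ ^ 2 / ‖(WithLp.toLp 2 1 : EuclideanSpace ℝ V)‖ ^ 2) :=
  have hT := isSymmetric_toEuclideanLin_adjMatrix (G := G)
  hT.norm_apply_sq_le_of_apply_eq_smul hreg.toEuclideanLin_adjMatrix_one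
    (fun _ hy => hT.norm_apply_sq_le_of_forall_inner_eigenspace_eq_zero
      (by rwa [spectrum_toLpLin]) fun _ hz => hconn.inner_eq_zero_of_mem_eigenspace hreg hz hy) x

theorem IsRegularOfDegree.sq_mul_ncard_le_ncard_nbhd_mul (hreg : G.IsRegularOfDegree d)
    (S : Set V) :
    ((d : ℝ) * S.ncard) ^ 2 ≤
      (nbhd G S).ncard * ‖toEuclideanLin (G.adjMatrix ℝ) (WithLp.toLp 2 (S.indicator 1))‖ ^ 2 := by
  set f : EuclideanSpace ℝ V := WithLp.toLp 2 (S.indicator 1)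
  set g := toEuclideanLin (G.adjMatrix ℝ) f
  have hsum : ∑ w, g w = d * S.ncard := by
    have h := isSymmetric_toEuclideanLin_adjMatrix (G := G) (WithLp.toLp 2 1) f
    rw [hreg.toEuclideanLin_adjMatrix_one, real_inner_smul_left,
      EuclideanSpace.inner_toLp_one_toLp_indicator_one] at h
    simpa only [PiLp.inner_apply, RCLike.inner_apply, conj_trivial, Pi.one_apply, mul_one]
      using h.symm
  have hsupp : ∀ w ∉ (Set.toFinite (nbhd G S)).toFinset, g w = 0 := by
    intro w hw
    simp only [Set.Finite.mem_toFinset] at hw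
    simp only [g, f, toLpLin_apply, adjMatrix_mulVec_apply]
    refine Finset.sum_eq_zero fun v hv => Set.indicator_of_notMem (fun hvS => hw ?_) _
    exact ⟨v, hvS, ((G.mem_neighborFinset w v).mp hv).symm⟩
  rw [← hsum, Set.ncard_eq_toFinset_card _ (Set.toFinite _)]
  exact EuclideanSpace.sq_sum_le_card_mul_norm_sq hsupp

theorem Connected.norm_toEuclideanLin_adjMatrix_indicator_sq_le (hconn : G.Connected)
    (hreg : G.IsRegularOfDegree d) {ε : ℝ}
    (hspec : ∀ μ ∈ spectrum ℝ (G.adjMatrix ℝ), μ ≠ d → |μ| ≤ ε * d) (S : Set V) :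
    ‖toEuclideanLin (G.adjMatrix ℝ) (WithLp.toLp 2 (S.indicator 1))‖ ^ 2 ≤
      d ^ 2 * (S.ncard ^ 2 / Fintype.card V) +
      (ε * d) ^ 2 * (S.ncard - S.ncard ^ 2 / Fintype.card V) := by
  simpa only [EuclideanSpace.inner_toLp_one_toLp_indicator_one,
    EuclideanSpace.norm_toLp_indicator_one_sq, EuclideanSpace.norm_toLp_one_sq]
    using hconn.norm_toEuclideanLin_adjMatrix_sq_le hreg hspec (WithLp.toLp 2 (S.indicator 1))

end SimpleGraph

/-- If `G` is a finite connected `d`-regular graph on `n` vertices which is an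
`ε`-expander (all adjacency-matrix eigenvalues other than the largest one `d`
have absolute value at most `ε·d`, with `ε < 1`), then for every `δ ≤ 1/2` and
every vertex set `S` with `|S| ≤ δ·n` one has
`|N(S)| ≥ |S| / ( ε²(1−δ) + δ )`. -/
theorem stmt8 {V : Type*} [Fintype V] [DecidableEq V] (G : SimpleGraph V)
    [DecidableRel G.Adj] (hconn : G.Connected)
    (d : ℕ) (hreg : G.IsRegularOfDegree d)
    (n : ℕ) (hn : Fintype.card V = n)
    (ε : ℝ) (hε : ε < 1)
    (hspec : ∀ μ ∈ spectrum ℝ (SimpleGraph.adjMatrix ℝ G), μ ≠ (d : ℝ) → |μ| ≤ ε * d)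
    (δ : ℝ) (hδ : δ ≤ 1 / 2)
    (S : Set V) (hS : (S.ncard : ℝ) ≤ δ * n) :
    (S.ncard : ℝ) / (ε ^ 2 * (1 - δ) + δ) ≤ (nbhd G S).ncard := by
  obtain rfl | hS₀ := S.eq_empty_or_nonempty
  · simp
  have hs : (1 : ℝ) ≤ S.ncard := by exact_mod_cast (Set.ncard_pos S.toFinite).mpr hS₀
  have hn₂ : (2 : ℝ) ≤ n := by linarith [mul_le_mul_of_nonneg_right hδ (Nat.cast_nonneg n)]
  have : Nontrivial V := Fintype.one_lt_card_iff_nontrivial.mp (by rw [hn]; exact_mod_cast hn₂)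
  obtain ⟨v⟩ := hconn.nonempty
  have hd : (0 : ℝ) < d := by
    exact_mod_cast hreg.degree_eq v ▸ hconn.preconnected.degree_pos_of_nontrivial v
  have hε₀ : 0 ≤ ε := by
    obtain ⟨μ, hμ, hμd⟩ := G.exists_mem_spectrum_adjMatrix_ne hd.ne'
    exact (mul_nonneg_iff_of_pos_right hd).mp ((abs_nonneg μ).trans (hspec μ hμ hμd))
  have key := (hreg.sq_mul_ncard_le_ncard_nbhd_mul S).trans
    (mul_le_mul_of_nonneg_left (hconn.norm_toEuclideanLin_adjMatrix_indicator_sq_le hreg hspec S)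
      (Nat.cast_nonneg _))
  rw [hn] at key
  set s : ℝ := (S.ncard : ℝ)
  set N : ℝ := ((nbhd G S).ncard : ℝ)
  have hnpos : (0 : ℝ) < n := by linarith
  have hdensity : s / n ≤ δ := (div_le_iff₀ hnpos).mpr hS
  have hε₁ : ε ^ 2 ≤ 1 := by nlinarith
  have hsN : s ≤ N * (s / n + ε ^ 2 * (1 - s / n)) := by
    refine le_of_mul_le_mul_left (a := d ^ 2 * s) ?_ (by positivity)
    convert key using 1 <;> ring
  rw [div_le_iff₀ (by nlinarith)]
  calc s ≤ N * (s / n + ε ^ 2 * (1 - s / n)) := hsN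
    _ ≤ N * (ε ^ 2 * (1 - δ) + δ) := mul_le_mul_of_nonneg_left (by nlinarith) (Nat.cast_nonneg _)
end

section
/- For N ≥ 2 and 1 ≤ k ≤ N, let d_N^{(k)} denote the number of vertices y of the hypercube graph H_N such that the (x,y) entry of Σ_{i=1}^{k} A_N^i is nonzero, for a fixed vertex x (this number does not depend on x). Then: d_N^{(1)} = N for all N ≥ 2; d_N^{(2)} = N + d_{N−1}^{(2)} for all N ≥ 3; d_N^{(k)} = d_{N−1}^{(k−1)} + d_{N−1}^{(k)} for all N and k with 3 ≤ k ≤ N−1; and d_N^{(N)} = 2^N for all N ≥ 2. -/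
instance (N : ℕ) : DecidableRel (hypercube N).Adj := fun x y =>
  inferInstanceAs (Decidable (hammingDist x y = 1))

/-- The set of `P^{(k)}`-neighbors of a vertex `x` of `H_N`: those `y` with
`(Σ_{i=1}^k A_N^i) x y ≠ 0`. -/
def pkNbrs (N k : ℕ) (x : Fin N → Bool) : Set (Fin N → Bool) :=
  {y | (∑ i ∈ Finset.Icc 1 k, (SimpleGraph.adjMatrix ℕ (hypercube N)) ^ i) x y ≠ 0}

/-- `d_N^{(k)}`: the number of `P^{(k)}`-neighbors of a fixed vertex of `H_N`. -/
noncomputable def dNk (N k : ℕ) : ℕ :=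
  (pkNbrs N k fun _ => false).ncard


/-! A walk in `H_N` changes one coordinate per step, so it is at least as long as the Hamming
distance of its endpoints, and flipping the differing coordinates one by one gives a walk of
exactly that length. A step back and forth gives a closed walk of length 2, so for `k ≥ 2` the
`P^{(k)}`-neighbours of `x` form the Hamming ball of radius `k` about `x`, of size
`∑_{j ≤ k} C(N, j)`, while for `k = 1` they are the `N` neighbours of `x`. The recursions are
then Pascal's rule summed over `j`. -/

open Finset SimpleGraph

lemma SimpleGraph.sum_adjMatrix_pow_apply_ne_zero_iff {V : Type*} [Fintype V] [DecidableEq V]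
    (G : SimpleGraph V) [DecidableRel G.Adj] (k : ℕ) (x y : V) :
    (∑ i ∈ Icc 1 k, G.adjMatrix ℕ ^ i) x y ≠ 0 ↔
      ∃ w : G.Walk x y, 1 ≤ w.length ∧ w.length ≤ k := by
  simp only [Matrix.sum_apply, ne_eq, sum_eq_zero_iff, adjMatrix_pow_apply_eq_card_walk,
    Nat.cast_id, Fintype.card_eq_zero_iff, not_forall, not_isEmpty_iff, mem_Icc]
  constructor
  · rintro ⟨i, hi, ⟨w, rfl⟩⟩
    exact ⟨w, hi⟩
  · rintro ⟨w, hw⟩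
    exact ⟨w.length, hw, ⟨w, rfl⟩⟩

section Hamming

variable {ι : Type*} [Fintype ι] [DecidableEq ι] {β : ι → Type*} [∀ i, DecidableEq (β i)]

def diffCoordsEquiv (x : ι → Bool) : (ι → Bool) ≃ Finset ι where
  toFun y := {i | x i ≠ y i}
  invFun s i := if i ∈ s then !x i else x i
  left_inv y := by
    funext i
    cases hx : x i <;> cases hy : y i <;> simp [hx, hy]
  right_inv s := by
    ext i
    by_cases h : i ∈ s <;> simp [h]

lemma card_filter_hammingDist_eq (x : ι → Bool) (j : ℕ) :
    #{y | hammingDist x y = j} = (Fintype.card ι).choose j := by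
  rw [← card_univ, ← card_powersetCard]
  exact card_equiv (diffCoordsEquiv x) fun y => by simp [hammingDist, diffCoordsEquiv]

lemma card_filter_hammingDist_le (x : ι → Bool) (k : ℕ) :
    #{y | hammingDist x y ≤ k} = ∑ j ∈ range (k + 1), (Fintype.card ι).choose j := by
  rw [card_eq_sum_card_fiberwise (f := hammingDist x) (t := range (k + 1))
    fun y hy => by simpa [Nat.lt_succ_iff] using hy]
  refine sum_congr rfl fun j hj => ?_
  rw [filter_filter, ← card_filter_hammingDist_eq x j]
  congr 1
  refine filter_congr fun y _ => ?_
  simp only [mem_range] at hj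
  constructor
  · exact And.right
  · rintro rfl
    exact ⟨by omega, rfl⟩

lemma hammingDist_update_of_ne {x : ∀ i, β i} {i : ι} {b : β i} (h : x i ≠ b) :
    hammingDist x (Function.update x i b) = 1 := by
  rw [hammingDist, card_eq_one]
  refine ⟨i, eq_singleton_iff_unique_mem.2 ⟨by simpa using h, fun j hj => ?_⟩⟩
  by_contra hji
  simp [Function.update_of_ne hji] at hj

lemma hammingDist_update_add_one {x y : ∀ i, β i} {i : ι} (h : x i ≠ y i) :
    hammingDist (Function.update x i (y i)) y + 1 = hammingDist x y := by
  have hdiff : ({j | Function.update x i (y i) j ≠ y j} : Finset ι) =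
      ({j | x j ≠ y j} : Finset ι).erase i := by
    ext j
    by_cases hji : j = i
    · subst hji; simp
    · simp [hji]
  rw [hammingDist, hdiff, card_erase_add_one (by simpa using h)]
  rfl

end Hamming

variable {N : ℕ}

lemma hammingDist_le_length {x y : Fin N → Bool} (w : (hypercube N).Walk x y) :
    hammingDist x y ≤ w.length := by
  induction w with
  | nil => simp
  | @cons a b c hab w ih =>
    calc hammingDist a c ≤ hammingDist a b + hammingDist b c := hammingDist_triangle _ _ _
      _ ≤ 1 + w.length := by rw [show hammingDist a b = 1 from hab]; omega
      _ = (Walk.cons hab w).length := by rw [Walk.length_cons, add_comm]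

lemma exists_walk_length_eq_hammingDist (x y : Fin N → Bool) :
    ∃ w : (hypercube N).Walk x y, w.length = hammingDist x y := by
  induction hd : hammingDist x y generalizing x with
  | zero =>
    obtain rfl := hammingDist_eq_zero.1 hd
    exact ⟨.nil, rfl⟩
  | succ d ih =>
    obtain ⟨i, hi⟩ : ∃ i, x i ≠ y i := by
      by_contra! h
      simp [funext h] at hd
    have hadj : (hypercube N).Adj x (Function.update x i (y i)) := hammingDist_update_of_ne hi
    have hd' := hammingDist_update_add_one hi
    obtain ⟨w, hw⟩ := ih (Function.update x i (y i)) (by omega)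
    exact ⟨.cons hadj w, by rw [Walk.length_cons, hw]⟩

lemma mem_pkNbrs_one_iff {x y : Fin N → Bool} : y ∈ pkNbrs N 1 x ↔ hammingDist x y = 1 := by
  rw [pkNbrs, Set.mem_ofPred_eq, Icc_self, sum_singleton, pow_one, adjMatrix_apply,
    ite_ne_right_iff]
  exact and_iff_left one_ne_zero

lemma mem_pkNbrs_iff {k : ℕ} (hN : 0 < N) (hk : 2 ≤ k) {x y : Fin N → Bool} :
    y ∈ pkNbrs N k x ↔ hammingDist x y ≤ k := by
  rw [pkNbrs, Set.mem_ofPred_eq, sum_adjMatrix_pow_apply_ne_zero_iff]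
  refine ⟨fun ⟨w, _, hw⟩ => (hammingDist_le_length w).trans hw, fun hd => ?_⟩
  obtain rfl | hne := eq_or_ne x y
  · have hadj : (hypercube N).Adj x (Function.update x ⟨0, hN⟩ (!x ⟨0, hN⟩)) :=
      hammingDist_update_of_ne (by simp)
    exact ⟨.cons hadj (.cons hadj.symm .nil), by simp, by simpa using hk⟩
  · obtain ⟨w, hw⟩ := exists_walk_length_eq_hammingDist x y
    exact ⟨w, hw ▸ hammingDist_pos.2 hne, hw ▸ hd⟩

lemma ncard_pkNbrs_one (x : Fin N → Bool) : (pkNbrs N 1 x).ncard = N := by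
  have hset : pkNbrs N 1 x = ↑({y | hammingDist x y = 1} : Finset (Fin N → Bool)) := by
    ext y
    simp [mem_pkNbrs_one_iff]
  rw [hset, Set.ncard_coe_finset, card_filter_hammingDist_eq, Fintype.card_fin,
    Nat.choose_one_right]

lemma ncard_pkNbrs {k : ℕ} (hN : 0 < N) (hk : 2 ≤ k) (x : Fin N → Bool) :
    (pkNbrs N k x).ncard = ∑ j ∈ range (k + 1), N.choose j := by
  have hset : pkNbrs N k x = ↑({y | hammingDist x y ≤ k} : Finset (Fin N → Bool)) := by
    ext y
    simp [mem_pkNbrs_iff hN hk]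
  rw [hset, Set.ncard_coe_finset, card_filter_hammingDist_le, Fintype.card_fin]

lemma sum_range_choose_succ (M k : ℕ) :
    ∑ j ∈ range (k + 1), (M + 1).choose j =
      ∑ j ∈ range k, M.choose j + ∑ j ∈ range (k + 1), M.choose j := by
  rw [sum_range_succ', sum_range_succ' (fun j => M.choose j)]
  simp only [Nat.choose_succ_succ, Nat.choose_zero_right, sum_add_distrib]
  ring

lemma ncard_pkNbrs_eq_dNk {k : ℕ} (hN : 0 < N) (hk : 1 ≤ k) (x : Fin N → Bool) :
    (pkNbrs N k x).ncard = dNk N k := by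
  obtain rfl | hk := hk.eq_or_lt
  · rw [dNk, ncard_pkNbrs_one, ncard_pkNbrs_one]
  · rw [dNk, ncard_pkNbrs hN hk, ncard_pkNbrs hN hk]

lemma dNk_eq_sum_choose {k : ℕ} (hN : 0 < N) (hk : 2 ≤ k) :
    dNk N k = ∑ j ∈ range (k + 1), N.choose j :=
  ncard_pkNbrs hN hk _

/-- The number of `P^{(k)}`-neighbors of a vertex of `H_N` does not depend on
the vertex, and `d_N^{(k)}` satisfies: `d_N^{(1)} = N`;
`d_N^{(2)} = N + d_{N−1}^{(2)}`; `d_N^{(k)} = d_{N−1}^{(k−1)} + d_{N−1}^{(k)}`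
for `3 ≤ k ≤ N−1`; and `d_N^{(N)} = 2^N`. -/
theorem stmt16 :
    (∀ N k : ℕ, 2 ≤ N → 1 ≤ k → k ≤ N → ∀ x : Fin N → Bool,
      (pkNbrs N k x).ncard = dNk N k) ∧
    (∀ N : ℕ, 2 ≤ N → dNk N 1 = N) ∧
    (∀ N : ℕ, 3 ≤ N → dNk N 2 = N + dNk (N - 1) 2) ∧
    (∀ N k : ℕ, 3 ≤ k → k ≤ N - 1 → dNk N k = dNk (N - 1) (k - 1) + dNk (N - 1) k) ∧
    (∀ N : ℕ, 2 ≤ N → dNk N N = 2 ^ N) := by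
  refine ⟨fun N k hN hk _ x => ncard_pkNbrs_eq_dNk (by omega) hk x,
    fun N _ => ncard_pkNbrs_one _, fun N hN => ?_, fun N k hk hkN => ?_,
    fun N hN => by rw [dNk_eq_sum_choose (by omega) hN, Nat.sum_range_choose]⟩
  · obtain ⟨M, rfl⟩ : ∃ M, N = M + 1 := ⟨N - 1, by omega⟩
    rw [Nat.add_sub_cancel, dNk_eq_sum_choose (by omega) le_rfl,
      dNk_eq_sum_choose (by omega) le_rfl, sum_range_choose_succ]
    simp [sum_range_succ, add_comm]
  · obtain ⟨M, rfl⟩ : ∃ M, N = M + 1 := ⟨N - 1, by omega⟩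
    obtain ⟨l, rfl⟩ : ∃ l, k = l + 1 := ⟨k - 1, by omega⟩
    simp only [Nat.add_sub_cancel] at hkN ⊢
    rw [dNk_eq_sum_choose (by omega) (by omega), dNk_eq_sum_choose (by omega) (by omega),
      dNk_eq_sum_choose (by omega) (by omega)]
    exact sum_range_choose_succ M (l + 1)
end
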